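/- Let p = (c, c, 2c) ∈ (0,∞)³ with c = (1/3)·(27/2)^{1/3}. Then: (i) p₁·p₂·p₃ = 1 (so the corresponding metric has unit volume); (ii) the derivative of f at p vanishes (p is a critical point of f); (iii) the second derivative of f at p, viewed as a quadratic form on ℝ³, has kernel exactly the line ℝ·p and, counted with multiplicity, exactly one positive eigenvalue and exactly one negative eigenvalue. In particular, the Kähler–Einstein metric on SU(3)/T² has coindex 1. -/

import Mathlib

noncomputable section

/-- The normalized scalar curvature of invariant metrics on the full flag manifold
`SU(3)/T²`. -/
def scalSU3 : (Fin 3 → ℝ) → ℝ := fun x =>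
  (x 0 * x 1 * x 2) ^ ((1 : ℝ) / 3) *
    (1 / x 0 + 1 / x 1 + 1 / x 2
      - (1 / 6) * (x 0 / (x 1 * x 2) + x 1 / (x 0 * x 2) + x 2 / (x 0 * x 1)))

def hessSU3 (p v w : Fin 3 → ℝ) : ℝ := iteratedFDeriv ℝ 2 scalSU3 p ![v, w]

/-!
On the positive orthant `f = V ^ (-2/3) * M` with `V = x₀x₁x₂` and
`M = x₀x₁ + x₁x₂ + x₀x₂ - (x₀² + x₁² + x₂²) / 6`, so both derivatives of `f` follow from the
product and power rules. At `p = (c, c, 2c)` with `2c³ = 1` the Hessian collapses to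
`(6 α(v) α(w) - β(v) β(w)) / 9` with `α = x₀ - x₁` and `β = x₀ + x₁ - x₂`. Its kernel is
`ker α ∩ ker β = ℝ p`; a subspace on which it is positive (negative) definite meets `ker α`
(`ker β`) trivially, hence embeds into `ℝ` by `α` (`β`).
-/

open Filter Topology ContinuousLinearMap

theorem Submodule.finrank_le_one_of_forall_ne_zero {K V : Type*} [Field K] [AddCommGroup V]
    [Module K V] {W : Submodule K V} (φ : V →ₗ[K] K) (h : ∀ v ∈ W, v ≠ 0 → φ v ≠ 0) :
    Module.finrank K W ≤ 1 := by
  have hinj : Function.Injective (φ ∘ₗ W.subtype) := by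
    rw [← LinearMap.ker_eq_bot, Submodule.eq_bot_iff]
    intro v hv
    by_contra hv0
    exact h v v.2 (by simpa using hv0) hv
  simpa using LinearMap.finrank_le_finrank_of_injective hinj

theorem iteratedFDeriv_two_apply_eq_fderiv_apply {𝕜 E F : Type*} [NontriviallyNormedField 𝕜]
    [NormedAddCommGroup E] [NormedSpace 𝕜 E] [NormedAddCommGroup F] [NormedSpace 𝕜 F]
    {f : E → F} {x : E} (hf : ContDiffAt 𝕜 2 f x) (v w : E) :
    iteratedFDeriv 𝕜 2 f x ![v, w] = fderiv 𝕜 (fun y => fderiv 𝕜 f y w) x v := by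
  have hdiff : DifferentiableAt 𝕜 (fderiv 𝕜 f) x :=
    (hf.fderiv_right le_rfl).differentiableAt one_ne_zero
  rw [iteratedFDeriv_two_apply, fderiv_clm_apply hdiff (differentiableAt_const w)]
  simp

namespace SU3Flag

def vol (x : Fin 3 → ℝ) : ℝ := x 0 * x 1 * x 2

def scalNum (x : Fin 3 → ℝ) : ℝ :=
  x 0 * x 1 + x 1 * x 2 + x 0 * x 2 - (x 0 ^ 2 + x 1 ^ 2 + x 2 ^ 2) / 6

def posOrthant : Set (Fin 3 → ℝ) := Set.univ.pi fun _ => Set.Ioi 0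

theorem isOpen_posOrthant : IsOpen posOrthant :=
  isOpen_set_pi Set.finite_univ fun _ _ => isOpen_Ioi

theorem vol_pos {x : Fin 3 → ℝ} (hx : x ∈ posOrthant) : 0 < vol x :=
  mul_pos (mul_pos (hx 0 trivial) (hx 1 trivial)) (hx 2 trivial)

theorem scalSU3_eq {x : Fin 3 → ℝ} (hx : x ∈ posOrthant) :
    scalSU3 x = vol x ^ (-2 / 3 : ℝ) * scalNum x := by
  have h0 : x 0 ≠ 0 := (hx 0 trivial).ne'
  have h1 : x 1 ≠ 0 := (hx 1 trivial).ne'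
  have h2 : x 2 ≠ 0 := (hx 2 trivial).ne'
  rw [scalSU3, show (-2 / 3 : ℝ) = 1 / 3 - 1 by norm_num, Real.rpow_sub (vol_pos hx),
    Real.rpow_one, vol, scalNum]
  field_simp
  ring

theorem scalSU3_eventuallyEq {x : Fin 3 → ℝ} (hx : x ∈ posOrthant) :
    scalSU3 =ᶠ[𝓝 x] fun y => vol y ^ (-2 / 3 : ℝ) * scalNum y :=
  eventually_of_mem (isOpen_posOrthant.mem_nhds hx) fun _ hy => scalSU3_eq hy

theorem contDiffAt_scalSU3 {x : Fin 3 → ℝ} (hx : x ∈ posOrthant) : ContDiffAt ℝ 2 scalSU3 x := by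
  have hvol : ContDiff ℝ 2 vol := by unfold vol; fun_prop
  have hnum : ContDiff ℝ 2 scalNum := by unfold scalNum; fun_prop
  exact ((hvol.contDiffAt.rpow_const_of_ne (vol_pos hx).ne').mul hnum.contDiffAt)
    |>.congr_of_eventuallyEq (scalSU3_eventuallyEq hx)

def dvol (x : Fin 3 → ℝ) : (Fin 3 → ℝ) →L[ℝ] ℝ :=
  (x 1 * x 2) • proj 0 + (x 0 * x 2) • proj 1 + (x 0 * x 1) • proj 2

def dscalNum (x : Fin 3 → ℝ) : (Fin 3 → ℝ) →L[ℝ] ℝ :=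
  (x 1 + x 2 - x 0 / 3) • proj 0 + (x 0 + x 2 - x 1 / 3) • proj 1 + (x 0 + x 1 - x 2 / 3) • proj 2

def d2vol (x w : Fin 3 → ℝ) : (Fin 3 → ℝ) →L[ℝ] ℝ :=
  (x 2 * w 1 + x 1 * w 2) • proj 0 + (x 2 * w 0 + x 0 * w 2) • proj 1 +
    (x 1 * w 0 + x 0 * w 1) • proj 2

theorem hasFDerivAt_coord (i : Fin 3) (x : Fin 3 → ℝ) :
    HasFDerivAt (fun y : Fin 3 → ℝ => y i) (proj i : (Fin 3 → ℝ) →L[ℝ] ℝ) x :=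
  (proj (R := ℝ) (φ := fun _ : Fin 3 => ℝ) i).hasFDerivAt

theorem hasFDerivAt_vol (x : Fin 3 → ℝ) : HasFDerivAt vol (dvol x) x := by
  refine (((hasFDerivAt_coord 0 x).mul (hasFDerivAt_coord 1 x)).mul
    (hasFDerivAt_coord 2 x)).congr_fderiv ?_
  ext v
  simp [dvol]
  ring

theorem hasFDerivAt_scalNum (x : Fin 3 → ℝ) : HasFDerivAt scalNum (dscalNum x) x := by
  have h0 := hasFDerivAt_coord 0 x
  have h1 := hasFDerivAt_coord 1 x
  have h2 := hasFDerivAt_coord 2 x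
  refine ((((h0.mul h1).add (h1.mul h2)).add (h0.mul h2)).sub
    ((((h0.pow 2).add (h1.pow 2)).add (h2.pow 2)).mul_const (1 / 6 : ℝ))).congr_of_eventuallyEq
    ?_ |>.congr_fderiv ?_
  · exact Eventually.of_forall fun y => by
      simp only [scalNum, Pi.add_apply, Pi.sub_apply, Pi.mul_apply]
      ring
  ext v
  simp [dscalNum]
  ring

theorem dscalNum_apply_comm (x v : Fin 3 → ℝ) : dscalNum x v = dscalNum v x := by
  simp [dscalNum]
  ring

theorem hasFDerivAt_dvol_apply (x w : Fin 3 → ℝ) :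
    HasFDerivAt (fun y => dvol y w) (d2vol x w) x := by
  have h0 := hasFDerivAt_coord 0 x
  have h1 := hasFDerivAt_coord 1 x
  have h2 := hasFDerivAt_coord 2 x
  refine ((((h1.mul h2).mul_const (w 0)).add ((h0.mul h2).mul_const (w 1))).add
    ((h0.mul h1).mul_const (w 2))).congr_of_eventuallyEq ?_ |>.congr_fderiv ?_
  · exact Eventually.of_forall fun y => by simp [dvol]
  ext v
  simp [d2vol]
  ring

section Exponent

variable (e : ℝ)

def dscal (x : Fin 3 → ℝ) : (Fin 3 → ℝ) →L[ℝ] ℝ :=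
  vol x ^ e • dscalNum x + scalNum x • ((e * vol x ^ (e - 1)) • dvol x)

theorem hasFDerivAt_rpow_vol_mul_scalNum {x : Fin 3 → ℝ} (hx : x ∈ posOrthant) :
    HasFDerivAt (fun y => vol y ^ e * scalNum y) (dscal e x) x :=
  ((hasFDerivAt_vol x).rpow_const (Or.inl (vol_pos hx).ne')).mul (hasFDerivAt_scalNum x)

theorem fderiv_dscal_apply {x : Fin 3 → ℝ} (hx : x ∈ posOrthant) (v w : Fin 3 → ℝ) :
    fderiv ℝ (fun y => dscal e y w) x v =
      vol x ^ e * dscalNum v w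
        + e * vol x ^ (e - 1) * (dvol x v * dscalNum x w + dscalNum x v * dvol x w)
        + e * (e - 1) * vol x ^ (e - 1 - 1) * scalNum x * dvol x v * dvol x w
        + e * vol x ^ (e - 1) * scalNum x * d2vol x w v := by
  have hV : vol x ≠ 0 := (vol_pos hx).ne'
  have hdscalNum : HasFDerivAt (fun y => dscalNum y w) (dscalNum w) x := by
    simpa only [dscalNum_apply_comm _ w] using (dscalNum w).hasFDerivAt
  have h : HasFDerivAt (fun y => dscal e y w) _ x :=
    ((((hasFDerivAt_vol x).rpow_const (p := e) (Or.inl hV)).mul hdscalNum).add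
      ((hasFDerivAt_scalNum x).mul ((((hasFDerivAt_vol x).rpow_const (p := e - 1)
        (Or.inl hV)).const_mul e).mul (hasFDerivAt_dvol_apply x w)))).congr_of_eventuallyEq
      (Eventually.of_forall fun y => by simp [dscal, mul_assoc])
  rw [h.fderiv]
  simp [dscalNum_apply_comm v w]
  ring

end Exponent

theorem hasFDerivAt_scalSU3 {x : Fin 3 → ℝ} (hx : x ∈ posOrthant) :
    HasFDerivAt scalSU3 (dscal (-2 / 3) x) x :=
  (hasFDerivAt_rpow_vol_mul_scalNum _ hx).congr_of_eventuallyEq (scalSU3_eventuallyEq hx)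

theorem hessSU3_eq {x : Fin 3 → ℝ} (hx : x ∈ posOrthant) (v w : Fin 3 → ℝ) :
    hessSU3 x v w =
      vol x ^ (-2 / 3 : ℝ) * dscalNum v w
        + -2 / 3 * vol x ^ (-2 / 3 - 1 : ℝ) * (dvol x v * dscalNum x w + dscalNum x v * dvol x w)
        + -2 / 3 * (-2 / 3 - 1) * vol x ^ (-2 / 3 - 1 - 1 : ℝ) * scalNum x * dvol x v * dvol x w
        + -2 / 3 * vol x ^ (-2 / 3 - 1 : ℝ) * scalNum x * d2vol x w v := by
  have hfderiv : (fun y => fderiv ℝ scalSU3 y w) =ᶠ[𝓝 x] fun y => dscal (-2 / 3) y w :=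
    eventually_of_mem (isOpen_posOrthant.mem_nhds hx) fun y hy => by
      dsimp only
      rw [(hasFDerivAt_scalSU3 hy).fderiv]
  rw [hessSU3, iteratedFDeriv_two_apply_eq_fderiv_apply (contDiffAt_scalSU3 hx),
    hfderiv.fderiv_eq, fderiv_dscal_apply _ hx]

def keMetric (c : ℝ) : Fin 3 → ℝ := ![c, c, 2 * c]

theorem keMetric_mem_posOrthant {c : ℝ} (hc : 0 < c) : keMetric c ∈ posOrthant := by
  intro i _
  fin_cases i <;> simp [keMetric, hc]

theorem vol_keMetric (c : ℝ) : vol (keMetric c) = 2 * c ^ 3 := by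
  simp [vol, keMetric]
  ring

theorem dscal_apply {x : Fin 3 → ℝ} (hx : vol x ≠ 0) (e : ℝ) (y : Fin 3 → ℝ) :
    dscal e x y = vol x ^ (e - 1) * (vol x * dscalNum x y + e * scalNum x * dvol x y) := by
  simp only [dscal, Real.rpow_sub_one hx, add_apply, smul_apply, smul_eq_mul]
  field_simp

-- `f` is homogeneous of degree `0`, so the whole ray through `p` is critical.
theorem hasFDerivAt_scalSU3_keMetric {c : ℝ} (hc : 0 < c) :
    HasFDerivAt scalSU3 (0 : (Fin 3 → ℝ) →L[ℝ] ℝ) (keMetric c) := by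
  convert hasFDerivAt_scalSU3 (keMetric_mem_posOrthant hc) using 1
  ext y
  rw [dscal_apply (vol_pos (keMetric_mem_posOrthant hc)).ne', vol_keMetric, zero_apply]
  refine (mul_eq_zero_of_right _ ?_).symm
  simp [keMetric, dscalNum, dvol, scalNum]
  ring

def coord (i : Fin 3) : (Fin 3 → ℝ) →ₗ[ℝ] ℝ := LinearMap.proj i

def sub01 : (Fin 3 → ℝ) →ₗ[ℝ] ℝ := coord 0 - coord 1

def add01Sub2 : (Fin 3 → ℝ) →ₗ[ℝ] ℝ := coord 0 + coord 1 - coord 2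

theorem hessSU3_keMetric {c : ℝ} (hc : 2 * c ^ 3 = 1) (v w : Fin 3 → ℝ) :
    hessSU3 (keMetric c) v w = (6 * sub01 v * sub01 w - add01Sub2 v * add01Sub2 w) / 9 := by
  have hpos : 0 < c := (Odd.pow_pos_iff (by decide : Odd 3)).mp (by linarith)
  rw [hessSU3_eq (keMetric_mem_posOrthant hpos), vol_keMetric, hc]
  simp [keMetric, dscalNum, dvol, d2vol, scalNum, sub01, add01Sub2, coord]
  -- a polynomial identity in `c` modulo `2 * c ^ 3 = 1`
  grind

theorem sub01_keMetric (c : ℝ) : sub01 (keMetric c) = 0 := by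
  simp [sub01, coord, keMetric]

theorem add01Sub2_keMetric (c : ℝ) : add01Sub2 (keMetric c) = 0 := by
  simp [add01Sub2, coord, keMetric]
  ring

theorem forall_hessSU3_keMetric_eq_zero_iff {c : ℝ} (hc : 2 * c ^ 3 = 1) (v : Fin 3 → ℝ) :
    (∀ w, hessSU3 (keMetric c) v w = 0) ↔ ∃ t : ℝ, v = t • keMetric c := by
  have hc0 : c ≠ 0 := by rintro rfl; norm_num at hc
  constructor
  · intro h
    have h₁ := h ![1, -1, 0]
    have h₂ := h ![0, 0, 1]
    simp [hessSU3_keMetric hc, sub01, add01Sub2, coord] at h₁ h₂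
    refine ⟨v 0 / c, funext fun i => ?_⟩
    fin_cases i <;> simp [keMetric] <;> field_simp <;> linarith
  · rintro ⟨t, rfl⟩ w
    rw [hessSU3_keMetric hc]
    simp only [map_smul, sub01_keMetric, add01Sub2_keMetric]
    simp

theorem finrank_le_one_of_hessSU3_keMetric_pos {c : ℝ} (hc : 2 * c ^ 3 = 1)
    (W : Submodule ℝ (Fin 3 → ℝ)) (hW : ∀ v ∈ W, v ≠ 0 → 0 < hessSU3 (keMetric c) v v) :
    Module.finrank ℝ W ≤ 1 :=
  Submodule.finrank_le_one_of_forall_ne_zero sub01 fun v hv hv0 h0 => by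
    have := hW v hv hv0
    rw [hessSU3_keMetric hc, h0] at this
    nlinarith [sq_nonneg (add01Sub2 v)]

theorem finrank_le_one_of_hessSU3_keMetric_neg {c : ℝ} (hc : 2 * c ^ 3 = 1)
    (W : Submodule ℝ (Fin 3 → ℝ)) (hW : ∀ v ∈ W, v ≠ 0 → hessSU3 (keMetric c) v v < 0) :
    Module.finrank ℝ W ≤ 1 :=
  Submodule.finrank_le_one_of_forall_ne_zero add01Sub2 fun v hv hv0 h0 => by
    have := hW v hv hv0
    rw [hessSU3_keMetric hc, h0] at this
    nlinarith [sq_nonneg (sub01 v)]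

end SU3Flag

open SU3Flag in
theorem KE_SU3_coindex_one :
    ∀ c : ℝ, c = (1 / 3) * (27 / 2 : ℝ) ^ ((1 : ℝ) / 3) →
    ∀ p : Fin 3 → ℝ, p = ![c, c, 2 * c] →
    (p 0 * p 1 * p 2 = 1) ∧
    HasFDerivAt scalSU3 (0 : (Fin 3 → ℝ) →L[ℝ] ℝ) p ∧
    ContDiffAt ℝ 2 scalSU3 p ∧
    (∀ v : Fin 3 → ℝ, (∀ w : Fin 3 → ℝ, hessSU3 p v w = 0) ↔ ∃ t : ℝ, v = t • p) ∧
    (∃ v : Fin 3 → ℝ, 0 < hessSU3 p v v) ∧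
    (∀ W : Submodule ℝ (Fin 3 → ℝ), (∀ v ∈ W, v ≠ 0 → 0 < hessSU3 p v v) →
      Module.finrank ℝ W ≤ 1) ∧
    (∃ v : Fin 3 → ℝ, hessSU3 p v v < 0) ∧
    (∀ W : Submodule ℝ (Fin 3 → ℝ), (∀ v ∈ W, v ≠ 0 → hessSU3 p v v < 0) →
      Module.finrank ℝ W ≤ 1) := by
  intro c hc p hp
  replace hp : p = keMetric c := hp
  subst hp
  have hc3 : 2 * c ^ 3 = 1 := by
    have hcube : ((27 / 2 : ℝ) ^ ((1 : ℝ) / 3)) ^ 3 = 27 / 2 := by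
      rw [← Real.rpow_natCast, ← Real.rpow_mul (by norm_num)]
      norm_num
    rw [hc, mul_pow, hcube]
    norm_num
  have hc0 : 0 < c := by rw [hc]; positivity
  refine ⟨(vol_keMetric c).trans hc3, hasFDerivAt_scalSU3_keMetric hc0,
    contDiffAt_scalSU3 (keMetric_mem_posOrthant hc0), forall_hessSU3_keMetric_eq_zero_iff hc3,
    ⟨![1, -1, 0], ?_⟩, finrank_le_one_of_hessSU3_keMetric_pos hc3,
    ⟨![0, 0, 1], ?_⟩, finrank_le_one_of_hessSU3_keMetric_neg hc3⟩ <;>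
  · rw [hessSU3_keMetric hc3]
    norm_num [sub01, add01Sub2, coord, Matrix.cons_val_two]
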